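/- arXiv:2207.02975 — 3 statements merged into one kernel-verified Lean document; each statement's English description precedes it below -/
import Mathlib

section
/- Let 1<p<∞. There exist positive constants c and C (depending only on p) such that for every positive integer n, c · n ≤ ‖Δ_n‖_{S_p} ≤ C · n, where Δ_n is the n×n Hankel matrix with entries (Δ_n)_{jk} = 1 if j+k < n and (Δ_n)_{jk} = 0 if j+k ≥ n (indices 0 ≤ j,k ≤ n−1). -/
open scoped BigOperators

/-- The singular values of a square complex matrix: square roots of the
eigenvalues of `Aᴴ * A` (in the order produced by the spectral theorem). -/
noncomputable def singVals {ι : Type*} [Fintype ι] [DecidableEq ι]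
    (A : Matrix ι ι ℂ) : ι → ℝ :=
  fun i => Real.sqrt ((Matrix.isHermitian_conjTranspose_mul_self A).eigenvalues i)

/-- The Schatten–von Neumann quasinorm `‖A‖_{S_p} = (∑ s_j(A)^p)^{1/p}`. -/
noncomputable def schattenNorm (p : ℝ) {ι : Type*} [Fintype ι] [DecidableEq ι]
    (A : Matrix ι ι ℂ) : ℝ :=
  (∑ i, singVals A i ^ p) ^ (1 / p)

/-- `Δ_n`: the `n × n` Hankel matrix with `(Δ_n)_{jk} = 1` iff `j + k < n`. -/
def deltaMat (n : ℕ) : Matrix (Fin n) (Fin n) ℂ :=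
  Matrix.of fun j k => if (j : ℕ) + (k : ℕ) < n then 1 else 0

/-!
If `B` has rank `r`, then on the span of the eigenvectors of `Aᴴ A` with `s_i(A) ≥ t` the matrix
`A` stretches every vector by at least `t`; that span meets `ker B` in dimension
`≥ #{i | s_i(A) ≥ t} - r`, and Bessel's inequality on an orthonormal basis of the intersection gives
`#{i | s_i(A) ≥ t} ≤ r + ‖A - B‖_F² / t²`. For `Δ_n`, replacing every row by the first row of its
block of `q ≈ t` consecutive rows gives `B` of rank `≤ n / q + 1` with `‖Δ_n - B‖_F² ≤ n q`, hence
the weak-type bound `#{i | s_i ≥ t} · t ≤ 4 n`. So the `k`-th largest singular value is at most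
`4 n / k`, and for `p > 1` the sum `∑ₖ (4 n / k)^p` is `O(n^p)`. The lower bound comes from the
all-ones vector, which `Δ_n` stretches by a factor `≥ n / 2`.
-/

open Finset Module Matrix

section Euclidean

variable {𝕜 m n : Type*} [RCLike 𝕜] [Fintype m] [Fintype n] [DecidableEq n]

lemma sum_norm_sq_toEuclideanLin_le_of_orthonormal (A : Matrix m n 𝕜) {κ : Type*} [Fintype κ]
    {v : κ → EuclideanSpace 𝕜 n} (hv : Orthonormal 𝕜 v) :
    ∑ k, ‖toEuclideanLin A (v k)‖ ^ 2 ≤ ∑ i, ∑ j, ‖A i j‖ ^ 2 := by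
  let row : m → EuclideanSpace 𝕜 n := fun i => WithLp.toLp 2 (star (A i))
  have hrow : ∀ i x, toEuclideanLin A x i = inner 𝕜 (row i) x := fun i x => by
    simp [row, EuclideanSpace.inner_eq_star_dotProduct, mulVec, dotProduct, mul_comm]
  calc ∑ k, ‖toEuclideanLin A (v k)‖ ^ 2 = ∑ i, ∑ k, ‖inner 𝕜 (v k) (row i)‖ ^ 2 := by
        rw [Finset.sum_comm]
        simp_rw [EuclideanSpace.norm_sq_eq, hrow, norm_inner_symm]
    _ ≤ ∑ i, ‖row i‖ ^ 2 := sum_le_sum fun i _ => hv.sum_inner_products_le _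
    _ = ∑ i, ∑ j, ‖A i j‖ ^ 2 := by simp [row, EuclideanSpace.norm_sq_eq]

lemma finrank_le_rank_add_of_le_norm (A B : Matrix m n 𝕜) (W : Submodule 𝕜 (EuclideanSpace 𝕜 n))
    {t : ℝ} (ht : 0 < t) (hW : ∀ v ∈ W, t * ‖v‖ ≤ ‖toEuclideanLin A v‖) :
    (finrank 𝕜 W : ℝ) ≤ B.rank + (∑ i, ∑ j, ‖(A - B) i j‖ ^ 2) / t ^ 2 := by
  set K := LinearMap.ker (toEuclideanLin B)
  have hdim : finrank 𝕜 W ≤ B.rank + finrank 𝕜 ↥(W ⊓ K) := by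
    have hsup := Submodule.finrank_sup_add_finrank_inf_eq W K
    have hker : finrank 𝕜 (LinearMap.range (toEuclideanLin B)) + finrank 𝕜 K =
        finrank 𝕜 (EuclideanSpace 𝕜 n) := LinearMap.finrank_range_add_finrank_ker _
    have hle : finrank 𝕜 ↥(W ⊔ K) ≤ finrank 𝕜 (EuclideanSpace 𝕜 n) := Submodule.finrank_le _
    have hrank : B.rank = finrank 𝕜 (LinearMap.range (toEuclideanLin B)) :=
      toEuclideanLin_eq_toLin_orthonormal (𝕜 := 𝕜) (m := m) (n := n) ▸
        rank_eq_finrank_range_toLin B (EuclideanSpace.basisFun m 𝕜).toBasis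
          (EuclideanSpace.basisFun n 𝕜).toBasis
    rw [← hrank] at hker
    omega
  let w := stdOrthonormalBasis 𝕜 ↥(W ⊓ K)
  have hw : Orthonormal 𝕜 fun j => (w j : EuclideanSpace 𝕜 n) :=
    w.orthonormal.comp_linearIsometry (W ⊓ K).subtypeₗᵢ
  have hlow : ∀ j, t ≤ ‖toEuclideanLin (A - B) (w j)‖ := fun j =>
    calc t = t * ‖(w j : EuclideanSpace 𝕜 n)‖ := by rw [hw.1 j, mul_one]
      _ ≤ ‖toEuclideanLin A (w j)‖ := hW _ (w j).2.1
      _ = ‖toEuclideanLin (A - B) (w j)‖ := by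
        rw [map_sub, LinearMap.sub_apply, (w j).2.2, sub_zero]
  have hcount : (finrank 𝕜 ↥(W ⊓ K) : ℝ) * t ^ 2 ≤ ∑ i, ∑ j, ‖(A - B) i j‖ ^ 2 :=
    calc (finrank 𝕜 ↥(W ⊓ K) : ℝ) * t ^ 2 = ∑ _j : Fin (finrank 𝕜 ↥(W ⊓ K)), t ^ 2 := by simp
      _ ≤ ∑ j, ‖toEuclideanLin (A - B) (w j)‖ ^ 2 :=
        sum_le_sum fun j _ => pow_le_pow_left₀ ht.le (hlow j) 2
      _ ≤ _ := sum_norm_sq_toEuclideanLin_le_of_orthonormal _ hw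
  calc (finrank 𝕜 W : ℝ) ≤ B.rank + finrank 𝕜 ↥(W ⊓ K) := by exact_mod_cast hdim
    _ ≤ B.rank + (∑ i, ∑ j, ‖(A - B) i j‖ ^ 2) / t ^ 2 := by
      gcongr
      rwa [le_div_iff₀ (by positivity)]

lemma norm_sq_toEuclideanLin_eq_sum_eigenvalues [DecidableEq m] (A : Matrix m n 𝕜)
    (v : EuclideanSpace 𝕜 n) :
    ‖toEuclideanLin A v‖ ^ 2 = ∑ i, (isHermitian_conjTranspose_mul_self A).eigenvalues i *
      ‖inner 𝕜 ((isHermitian_conjTranspose_mul_self A).eigenvectorBasis i) v‖ ^ 2 := by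
  set hA := isHermitian_conjTranspose_mul_self A
  set b := hA.eigenvectorBasis
  have hgram : inner 𝕜 (toEuclideanLin A v) (toEuclideanLin A v) =
      inner 𝕜 v (toEuclideanLin (Aᴴ * A) v) := by
    rw [← LinearMap.adjoint_inner_right, ← toEuclideanLin_conjTranspose_eq_adjoint]
    simp
  have heigen : ∀ i, inner 𝕜 (b i) (toEuclideanLin (Aᴴ * A) v) =
      (hA.eigenvalues i : 𝕜) * inner 𝕜 (b i) v := fun i => by
    have hbi : toEuclideanLin (Aᴴ * A) (b i) = hA.eigenvalues i • b i := by
      ext j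
      simpa using congrFun (hA.mulVec_eigenvectorBasis i) j
    rw [← isSymmetric_toEuclideanLin_iff.mpr hA, hbi, RCLike.real_smul_eq_coe_smul (K := 𝕜),
      inner_smul_left, RCLike.conj_ofReal]
  apply RCLike.ofReal_injective (K := 𝕜)
  push_cast
  rw [← inner_self_eq_norm_sq_to_K, hgram, ← b.sum_inner_mul_inner]
  refine sum_congr rfl fun i _ => ?_
  rw [heigen, ← inner_conj_symm v (b i), mul_left_comm, RCLike.conj_mul]

end Euclidean

section SingularValues

variable {ι : Type*} [Fintype ι] [DecidableEq ι]

lemma sq_singVals (A : Matrix ι ι ℂ) (i : ι) :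
    singVals A i ^ 2 = (isHermitian_conjTranspose_mul_self A).eigenvalues i :=
  Real.sq_sqrt (eigenvalues_conjTranspose_mul_self_nonneg A i)

lemma singVals_nonneg (A : Matrix ι ι ℂ) (i : ι) : 0 ≤ singVals A i := Real.sqrt_nonneg _

lemma card_le_rank_add_of_le_singVals (A B : Matrix ι ι ℂ) {t : ℝ} (ht : 0 < t) :
    (#{i | t ≤ singVals A i} : ℝ) ≤ B.rank + (∑ i, ∑ j, ‖(A - B) i j‖ ^ 2) / t ^ 2 := by
  set b := (isHermitian_conjTranspose_mul_self A).eigenvectorBasis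
  set S : Finset ι := {i | t ≤ singVals A i}
  let W := Submodule.span ℂ (Set.range (b ∘ (↑) : S → EuclideanSpace ℂ ι))
  have hW : finrank ℂ W = #S := by
    rw [finrank_span_eq_card (b.orthonormal.linearIndependent.comp _ Subtype.val_injective),
      Fintype.card_coe]
  have hlow : ∀ v ∈ W, t * ‖v‖ ≤ ‖toEuclideanLin A v‖ := by
    intro v hv
    have hvanish : ∀ i ∉ S, inner ℂ (b i) v = 0 := by
      intro i hi
      refine Submodule.mem_orthogonal_singleton_iff_inner_right.mp (Submodule.span_le.mpr ?_ hv)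
      rintro _ ⟨j, rfl⟩
      exact Submodule.mem_orthogonal_singleton_iff_inner_right.mpr
        (b.inner_eq_zero fun hij => hi (hij ▸ j.2))
    refine pow_le_pow_iff_left₀ (by positivity) (norm_nonneg _) two_ne_zero |>.mp ?_
    rw [mul_pow, norm_sq_toEuclideanLin_eq_sum_eigenvalues, ← b.sum_sq_norm_inner_right, mul_sum]
    refine sum_le_sum fun i _ => ?_
    by_cases hi : i ∈ S
    · rw [← sq_singVals]
      gcongr
      exact (mem_filter.mp hi).2
    · rw [show inner ℂ _ v = 0 from hvanish i hi]
      simp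
  simpa [hW] using finrank_le_rank_add_of_le_norm A B W ht hlow

lemma exists_norm_toEuclideanLin_le_singVals_mul [Nonempty ι] (A : Matrix ι ι ℂ)
    (v : EuclideanSpace ℂ ι) : ∃ i, ‖toEuclideanLin A v‖ ≤ singVals A i * ‖v‖ := by
  set b := (isHermitian_conjTranspose_mul_self A).eigenvectorBasis
  obtain ⟨i, hi⟩ := Finite.exists_max (singVals A)
  refine ⟨i, pow_le_pow_iff_left₀ (norm_nonneg _)
    (mul_nonneg (singVals_nonneg A i) (norm_nonneg _)) two_ne_zero |>.mp ?_⟩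
  rw [mul_pow, norm_sq_toEuclideanLin_eq_sum_eigenvalues, ← b.sum_sq_norm_inner_right, mul_sum]
  refine sum_le_sum fun j _ => ?_
  rw [← sq_singVals]
  gcongr
  exacts [singVals_nonneg A j, hi j]

end SingularValues

lemma sum_rpow_le_of_card_le_mul_le {n : ℕ} {s : Fin n → ℝ} (hs : ∀ i, 0 ≤ s i) {M : ℝ}
    (hM : ∀ t, (#{i | t ≤ s i} : ℝ) * t ≤ M) {p : ℝ} (hp : 0 ≤ p) :
    ∑ i, s i ^ p ≤ ∑ k ∈ range n, (M / (k + 1)) ^ p := by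
  set σ := Tuple.sort s
  have hsorted : ∀ j : Fin n, s (σ j) ≤ M / (n - j : ℕ) := by
    intro j
    have hcard : n - j ≤ #{i | s (σ j) ≤ s i} := by
      rw [← Fin.card_Ici j]
      refine card_le_card_of_injOn σ (fun j' hj' => ?_) σ.injective.injOn
      simpa using Tuple.monotone_sort s (mem_Ici.mp hj')
    rw [le_div_iff₀' (Nat.cast_pos.mpr (Nat.sub_pos_of_lt j.isLt))]
    calc ((n - j : ℕ) : ℝ) * s (σ j) ≤ #{i | s (σ j) ≤ s i} * s (σ j) := by
          gcongr
          exact hs _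
      _ ≤ M := hM _
  calc ∑ i, s i ^ p = ∑ j, s (σ j) ^ p := (Equiv.sum_comp σ _).symm
    _ ≤ ∑ j : Fin n, (M / (n - j : ℕ)) ^ p :=
      sum_le_sum fun j _ => Real.rpow_le_rpow (hs _) (hsorted j) hp
    _ = ∑ j : Fin n, (M / (j + 1 : ℕ)) ^ p :=
      Fintype.sum_equiv Fin.revPerm _ _ fun j => by
        rw [Fin.revPerm_apply, Fin.val_rev]
        congr 3
        omega
    _ = ∑ k ∈ range n, (M / (k + 1)) ^ p := by
      rw [Fin.sum_univ_eq_sum_range (fun k => (M / (k + 1 : ℕ)) ^ p)]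
      push_cast
      rfl

section Schatten

variable {ι : Type*} [Fintype ι] [DecidableEq ι] {p : ℝ}

lemma singVals_le_schattenNorm (hp : 0 < p) (A : Matrix ι ι ℂ) (i : ι) :
    singVals A i ≤ schattenNorm p A :=
  calc singVals A i = (singVals A i ^ p) ^ (1 / p) := by
        rw [← Real.rpow_mul (singVals_nonneg A i), mul_one_div_cancel hp.ne', Real.rpow_one]
    _ ≤ schattenNorm p A := by
        refine Real.rpow_le_rpow (by have := singVals_nonneg A i; positivity) ?_ (by positivity)
        exact single_le_sum (fun j _ => Real.rpow_nonneg (singVals_nonneg A j) p) (mem_univ i)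

lemma summable_one_div_nat_add_one_rpow (hp : 1 < p) :
    Summable fun k : ℕ => 1 / ((k : ℝ) + 1) ^ p := by
  simpa using (summable_nat_add_iff 1).mpr (Real.summable_one_div_nat_rpow.mpr hp)

lemma schattenNorm_le_of_card_le_mul_le {n : ℕ} (A : Matrix (Fin n) (Fin n) ℂ) {M : ℝ}
    (hM : ∀ t, (#{i | t ≤ singVals A i} : ℝ) * t ≤ M) (hp : 1 < p) :
    schattenNorm p A ≤ M * (∑' k : ℕ, 1 / ((k : ℝ) + 1) ^ p) ^ (1 / p) := by
  have hM0 : 0 ≤ M := by simpa using hM 0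
  have hζ : 0 ≤ ∑' k : ℕ, 1 / ((k : ℝ) + 1) ^ p := tsum_nonneg fun k => by positivity
  have hsum : ∑ i, singVals A i ^ p ≤ M ^ p * ∑' k : ℕ, 1 / ((k : ℝ) + 1) ^ p :=
    calc ∑ i, singVals A i ^ p ≤ ∑ k ∈ range n, (M / (k + 1)) ^ p :=
          sum_rpow_le_of_card_le_mul_le (singVals_nonneg A) hM (by linarith)
      _ = M ^ p * ∑ k ∈ range n, 1 / ((k : ℝ) + 1) ^ p := by
          rw [mul_sum]
          refine sum_congr rfl fun k _ => ?_
          rw [Real.div_rpow hM0 (by positivity)]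
          ring
      _ ≤ M ^ p * ∑' k : ℕ, 1 / ((k : ℝ) + 1) ^ p := by
          gcongr
          exact (summable_one_div_nat_add_one_rpow hp).sum_le_tsum _ fun k _ => by positivity
  calc schattenNorm p A ≤ (M ^ p * ∑' k : ℕ, 1 / ((k : ℝ) + 1) ^ p) ^ (1 / p) :=
        Real.rpow_le_rpow (sum_nonneg fun i _ => Real.rpow_nonneg (singVals_nonneg A i) p) hsum
          (by positivity)
    _ = M * (∑' k : ℕ, 1 / ((k : ℝ) + 1) ^ p) ^ (1 / p) := by
        rw [Real.mul_rpow (by positivity) hζ, ← Real.rpow_mul hM0,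
          mul_one_div_cancel (by linarith), Real.rpow_one]

end Schatten

section Delta

variable {n : ℕ}

lemma deltaMat_apply (j k : Fin n) : deltaMat n j k = if (j : ℕ) + k < n then 1 else 0 := rfl

lemma sum_norm_sq_deltaMat_le : ∑ j, ∑ k, ‖deltaMat n j k‖ ^ 2 ≤ n * n :=
  calc ∑ j, ∑ k, ‖deltaMat n j k‖ ^ 2 ≤ ∑ _j : Fin n, ∑ _k : Fin n, (1 : ℝ) :=
        sum_le_sum fun j _ => sum_le_sum fun k _ => by
          rw [deltaMat_apply]
          split_ifs <;> norm_num
    _ = n * n := by simp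

/-- Row `j` of `Δ_n` replaced by row `q ⌊j / q⌋`, written as a product through `Fin (n / q + 1)`
so that the rank bound is immediate. -/
def blockApprox (n q : ℕ) : Matrix (Fin n) (Fin n) ℂ :=
  (of fun (j : Fin n) (c : Fin (n / q + 1)) => if (j : ℕ) / q = c then (1 : ℂ) else 0) *
    of fun (c : Fin (n / q + 1)) (k : Fin n) => if q * c + k < n then (1 : ℂ) else 0

lemma blockApprox_apply (q : ℕ) (j k : Fin n) :
    blockApprox n q j k = if q * (j / q) + k < n then 1 else 0 := by
  have hj : (j : ℕ) / q < n / q + 1 := Nat.lt_succ_of_le (Nat.div_le_div_right j.isLt.le)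
  rw [blockApprox, mul_apply, Fintype.sum_eq_single ⟨j / q, hj⟩]
  · simp
  · intro c hc
    rw [of_apply, if_neg fun h => hc (Fin.ext h.symm), zero_mul]

lemma rank_blockApprox_le (q : ℕ) : (blockApprox n q).rank ≤ n / q + 1 :=
  (rank_mul_le_right _ _).trans (rank_le_height _)

lemma sum_norm_sq_deltaMat_sub_blockApprox_le {q : ℕ} (hq : 0 < q) :
    ∑ j, ∑ k, ‖(deltaMat n - blockApprox n q) j k‖ ^ 2 ≤ n * q := by
  suffices hrow : ∀ j, ∑ k, ‖(deltaMat n - blockApprox n q) j k‖ ^ 2 ≤ q by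
    simpa using sum_le_sum fun j (_ : j ∈ univ) => hrow j
  intro j
  have hentry : ∀ k : Fin n, ‖(deltaMat n - blockApprox n q) j k‖ ^ 2 =
      if n ≤ j + k ∧ q * (j / q) + k < n then 1 else 0 := by
    intro k
    have hblock : q * (j / q) ≤ (j : ℕ) := Nat.mul_div_le j q
    rw [Matrix.sub_apply, deltaMat_apply, blockApprox_apply]
    split_ifs <;> first | omega | simp
  have hcard : #{k : Fin n | n ≤ j + k ∧ q * (j / q) + k < n} ≤ q := by
    calc #{k : Fin n | n ≤ j + k ∧ q * (j / q) + k < n}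
        ≤ #(Ico (n - j) (n - q * (j / q))) := by
          refine card_le_card_of_injOn (fun k => (k : ℕ)) (fun k hk => ?_) Fin.val_injective.injOn
          simp only [coe_filter, Set.mem_ofPred_eq, mem_univ, true_and] at hk
          simp only [coe_Ico, Set.mem_Ico]
          omega
      _ ≤ q := by
          have := Nat.mod_lt j hq
          have := Nat.div_add_mod j q
          simp only [Nat.card_Ico]
          omega
  rw [sum_congr rfl fun k _ => hentry k, sum_boole]
  exact_mod_cast hcard

lemma card_le_singVals_deltaMat_mul_le_of_one_lt {t : ℝ} (ht1 : 1 < t) (htn : t ≤ n) :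
    (#{i | t ≤ singVals (deltaMat n) i} : ℝ) * t ≤ 4 * n := by
  have ht : 0 < t := by linarith
  have hn : (0 : ℝ) ≤ n := Nat.cast_nonneg n
  set q := ⌈t⌉₊
  have hq : 0 < q := Nat.ceil_pos.mpr ht
  have htq : t ≤ q := Nat.le_ceil t
  have hqt : (q : ℝ) < t + 1 := Nat.ceil_lt_add_one ht.le
  set E := ∑ j, ∑ k, ‖(deltaMat n - blockApprox n q) j k‖ ^ 2
  have hrank : ((blockApprox n q).rank : ℝ) * t ≤ n + t := by
    have hdiv : ((n / q : ℕ) : ℝ) * t ≤ n :=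
      calc ((n / q : ℕ) : ℝ) * t ≤ ((n / q : ℕ) : ℝ) * q := by gcongr
        _ ≤ n := by exact_mod_cast Nat.div_mul_le_self n q
    have hr : ((blockApprox n q).rank : ℝ) ≤ (n / q : ℕ) + 1 := by
      exact_mod_cast rank_blockApprox_le q
    nlinarith
  have herr : E / t ^ 2 * t ≤ 2 * n := by
    have hE : E ≤ 2 * n * t :=
      calc E ≤ (n : ℝ) * q := sum_norm_sq_deltaMat_sub_blockApprox_le hq
        _ ≤ n * (2 * t) := by gcongr; linarith
        _ = 2 * n * t := by ring
    rw [div_mul_eq_mul_div, div_le_iff₀ (by positivity)]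
    nlinarith
  calc (#{i | t ≤ singVals (deltaMat n) i} : ℝ) * t
        ≤ ((blockApprox n q).rank + E / t ^ 2) * t := by
        gcongr
        exact card_le_rank_add_of_le_singVals (deltaMat n) (blockApprox n q) ht
    _ = (blockApprox n q).rank * t + E / t ^ 2 * t := by ring
    _ ≤ 4 * n := by linarith

lemma card_le_singVals_deltaMat_mul_le (t : ℝ) :
    (#{i | t ≤ singVals (deltaMat n) i} : ℝ) * t ≤ 4 * n := by
  set N : ℝ := ((#{i | t ≤ singVals (deltaMat n) i} : ℕ) : ℝ)
  have hn : (0 : ℝ) ≤ n := Nat.cast_nonneg n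
  rcases le_or_gt t 1 with ht1 | ht1
  · have hNn : N ≤ n := Nat.cast_le.mpr (card_le_univ _ |>.trans (Fintype.card_fin n).le)
    nlinarith [(Nat.cast_nonneg _ : 0 ≤ N)]
  rcases le_or_gt t n with htn | htn
  · exact card_le_singVals_deltaMat_mul_le_of_one_lt ht1 htn
  have ht : 0 < t := by linarith
  have hcount := card_le_rank_add_of_le_singVals (deltaMat n) 0 ht
  rw [sub_zero, rank_zero, Nat.cast_zero, zero_add] at hcount
  calc N * t ≤ (∑ j, ∑ k, ‖deltaMat n j k‖ ^ 2) / t ^ 2 * t := by gcongr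
    _ ≤ n * n / t := by
        rw [div_mul_eq_mul_div, div_le_div_iff₀ (by positivity) ht]
        nlinarith [sum_norm_sq_deltaMat_le (n := n)]
    _ ≤ 4 * n := by
        rw [div_le_iff₀ ht]
        nlinarith

lemma cube_div_three_le_sum_range_sq (m : ℕ) :
    (m : ℝ) ^ 3 / 3 ≤ ∑ k ∈ range m, ((k : ℝ) + 1) ^ 2 := by
  induction m with
  | zero => simp
  | succ m ih =>
    rw [sum_range_succ]
    push_cast
    nlinarith [(Nat.cast_nonneg m : (0 : ℝ) ≤ m)]

lemma exists_half_le_singVals_deltaMat (hn : 0 < n) :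
    ∃ i, (n : ℝ) / 2 ≤ singVals (deltaMat n) i := by
  have : Nonempty (Fin n) := Fin.pos_iff_nonempty.mp hn
  set v : EuclideanSpace ℂ (Fin n) := WithLp.toLp 2 fun _ => 1
  have hv : ‖v‖ ^ 2 = n := by simp [v, EuclideanSpace.norm_sq_eq]
  have hΔv : ∀ j : Fin n, toEuclideanLin (deltaMat n) v j = ((n - j : ℕ) : ℂ) := by
    intro j
    have hcard : #{k : Fin n | (j : ℕ) + k < n} = n - j := by
      simp_rw [← lt_tsub_iff_left, Fin.card_filter_val_lt]
      omega
    simp [v, mulVec, dotProduct, deltaMat_apply, hcard]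
  have hnorm : (n : ℝ) ^ 3 / 4 ≤ ‖toEuclideanLin (deltaMat n) v‖ ^ 2 :=
    calc (n : ℝ) ^ 3 / 4 ≤ ∑ k ∈ range n, ((k : ℝ) + 1) ^ 2 := by
          have := cube_div_three_le_sum_range_sq n
          nlinarith [pow_nonneg (Nat.cast_nonneg n : (0 : ℝ) ≤ n) 3]
      _ = ∑ j : Fin n, ((n - j : ℕ) : ℝ) ^ 2 := by
          rw [← Fin.sum_univ_eq_sum_range (fun k => ((k : ℝ) + 1) ^ 2)]
          refine Fintype.sum_equiv Fin.revPerm _ _ fun j => ?_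
          rw [Fin.revPerm_apply, Fin.val_rev]
          congr 1
          push_cast [Nat.sub_sub_self j.isLt, Nat.succ_le_of_lt j.isLt]
          ring
      _ = ‖toEuclideanLin (deltaMat n) v‖ ^ 2 := by
          simp only [EuclideanSpace.norm_sq_eq, hΔv, Complex.norm_natCast]
  obtain ⟨i, hi⟩ := exists_norm_toEuclideanLin_le_singVals_mul (deltaMat n) v
  refine ⟨i, ?_⟩
  have hsq : ((n : ℝ) / 2) ^ 2 * n ≤ singVals (deltaMat n) i ^ 2 * n :=
    calc ((n : ℝ) / 2) ^ 2 * n = (n : ℝ) ^ 3 / 4 := by ring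
      _ ≤ ‖toEuclideanLin (deltaMat n) v‖ ^ 2 := hnorm
      _ ≤ (singVals (deltaMat n) i * ‖v‖) ^ 2 := pow_le_pow_left₀ (norm_nonneg _) hi 2
      _ = singVals (deltaMat n) i ^ 2 * n := by rw [mul_pow, hv]
  exact (pow_le_pow_iff_left₀ (by positivity) (singVals_nonneg _ i) two_ne_zero).mp
    (le_of_mul_le_mul_right hsq (Nat.cast_pos.mpr hn))

end Delta

/-- For `1 < p < ∞` there are positive constants `c, C` (depending
only on `p`) such that for every positive integer `n`,
`c · n ≤ ‖Δ_n‖_{S_p} ≤ C · n`. -/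
theorem deltaMat_schatten_asymptotics_p_gt_one (p : ℝ) (hp : 1 < p) :
    ∃ c C : ℝ, 0 < c ∧ 0 < C ∧ ∀ n : ℕ, 0 < n →
      c * (n : ℝ) ≤ schattenNorm p (deltaMat n) ∧
      schattenNorm p (deltaMat n) ≤ C * (n : ℝ) := by
  set ζ := ∑' k : ℕ, 1 / ((k : ℝ) + 1) ^ p
  have hζ : 0 < ζ := (summable_one_div_nat_add_one_rpow hp).tsum_pos (fun k => by positivity) 0
    (by norm_num)
  refine ⟨1 / 2, 4 * ζ ^ (1 / p), by norm_num, by positivity, fun n hn => ⟨?_, ?_⟩⟩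
  · obtain ⟨i, hi⟩ := exists_half_le_singVals_deltaMat hn
    calc 1 / 2 * (n : ℝ) = n / 2 := by ring
      _ ≤ singVals (deltaMat n) i := hi
      _ ≤ schattenNorm p (deltaMat n) := singVals_le_schattenNorm (by linarith) _ i
  · calc schattenNorm p (deltaMat n) ≤ 4 * n * ζ ^ (1 / p) :=
          schattenNorm_le_of_card_le_mul_le _ card_le_singVals_deltaMat_mul_le hp
      _ = 4 * ζ ^ (1 / p) * n := by ring
end

section
/- Let 0<p<∞, let m ≤ n be integers, and let f be a trigonometric polynomial of the form f(z) = Σ_{j=m}^{n} f̂(j) z^j. Then |f̂(m)| ≤ ‖f‖_{L^p} and |f̂(n)| ≤ ‖f‖_{L^p}. -/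
/-!
On the unit circle `|f(z)| = |g(z)|` for the polynomial `g(z) = ∑ f̂(j) z^(j-m)`, whose value at
`0` is `f̂(m)`. For any polynomial, `|g(0)|` is at most the Mahler measure
`M(g) = exp (⨍ log |g|)`, and Jensen's inequality for the convex function `exp` gives
`M(g)^p = exp (⨍ p log |g|) ≤ ⨍ |g|^p`. The last coefficient `f̂(n)` is the first coefficient of
the trigonometric polynomial `conj f`, whose spectrum is `-n, …, -m`.
-/

open scoped BigOperators

/-- The `L^p` quasinorm `((1/2π) ∫₀^{2π} |f(e^{it})|^p dt)^{1/p}` of a function on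
the unit circle, given as `t ↦ f(e^{it})`. -/
noncomputable def trigLp (p : ℝ) (f : ℝ → ℂ) : ℝ :=
  ((1 / (2 * Real.pi)) * ∫ t in (0:ℝ)..(2 * Real.pi), ‖f t‖ ^ p) ^ (1 / p)

open Real MeasureTheory

namespace Polynomial

theorem ae_eval_circleMap_ne_zero {g : ℂ[X]} (hg : g ≠ 0) (μ : Measure ℝ) [NullSingletonClass μ] :
    ∀ᵐ θ ∂μ, g.eval (circleMap 0 1 θ) ≠ 0 := by
  refine measure_mono_null (fun θ hθ ↦ ?_)
    ((g.roots.toFinset.countable_toSet.preimage_circleMap 0 one_ne_zero).measure_zero μ)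
  simpa [hg] using hθ

theorem mahlerMeasure_rpow_le_circleAverage (g : ℂ[X]) {p : ℝ} (hp : 0 ≤ p) :
    g.mahlerMeasure ^ p ≤ circleAverage (fun z ↦ ‖g.eval z‖ ^ p) 0 1 := by
  rcases eq_or_ne g 0 with rfl | hg
  · simp [circleAverage_const]
  have : IsFiniteMeasure (volume.restrict (Set.uIoc 0 (2 * π))) := by
    rw [Set.uIoc_of_le two_pi_pos.le]; infer_instance
  have : NeZero (volume (Set.uIoc 0 (2 * π))) := ⟨by simp⟩
  have hexp_log : ∀ᵐ θ ∂volume.restrict (Set.uIoc 0 (2 * π)),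
      exp (p * log ‖g.eval (circleMap 0 1 θ)‖) = ‖g.eval (circleMap 0 1 θ)‖ ^ p := by
    filter_upwards [ae_eval_circleMap_ne_zero hg _] with θ hθ
    rw [rpow_def_of_pos (norm_pos_iff.mpr hθ), mul_comm]
  have hcont : Continuous fun θ : ℝ ↦ ‖g.eval (circleMap 0 1 θ)‖ ^ p := by
    fun_prop (disch := exact Or.inr hp)
  rw [mahlerMeasure, if_pos hg, ← exp_mul, logMahlerMeasure, mul_comm, ← smul_eq_mul,
    ← circleAverage_fun_smul, circleAverage_eq_intervalAverage, circleAverage_eq_intervalAverage]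
  calc exp (⨍ θ in 0..2 * π, p * log ‖g.eval (circleMap 0 1 θ)‖)
      ≤ ⨍ θ in 0..2 * π, exp (p * log ‖g.eval (circleMap 0 1 θ)‖) := by
        refine convexOn_exp.map_average_le continuousOn_exp isClosed_univ (by simp) ?_ ?_
        · exact g.intervalIntegrable_mahlerMeasure.def'.const_mul p
        · exact (integrable_congr hexp_log).mpr hcont.integrableOn_uIoc
    _ = ⨍ θ in 0..2 * π, ‖g.eval (circleMap 0 1 θ)‖ ^ p := average_congr hexp_log

theorem norm_eval_zero_le_mahlerMeasure (g : ℂ[X]) : ‖g.eval 0‖ ≤ g.mahlerMeasure := by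
  simpa [coeff_zero_eq_eval_zero] using norm_coeff_le_choose_mul_mahlerMeasure 0 g

theorem norm_eval_zero_rpow_le_circleAverage (g : ℂ[X]) {p : ℝ} (hp : 0 ≤ p) :
    ‖g.eval 0‖ ^ p ≤ circleAverage (fun z ↦ ‖g.eval z‖ ^ p) 0 1 :=
  (rpow_le_rpow (norm_nonneg _) g.norm_eval_zero_le_mahlerMeasure hp).trans
    (g.mahlerMeasure_rpow_le_circleAverage hp)

end Polynomial

open Complex ComplexConjugate Finset Polynomial

theorem trigLp_eq_circleAverage (p : ℝ) (f : ℝ → ℂ) (F : ℂ → ℂ)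
    (hf : ∀ t, ‖f t‖ = ‖F (circleMap 0 1 t)‖) :
    trigLp p f = circleAverage (fun z ↦ ‖F z‖ ^ p) 0 1 ^ (1 / p) := by
  simp only [trigLp, circleAverage_def, hf, one_div, smul_eq_mul]

theorem norm_eval_zero_le_trigLp {p : ℝ} (hp : 0 < p) (g : ℂ[X]) {f : ℝ → ℂ}
    (hf : ∀ t, ‖f t‖ = ‖g.eval (circleMap 0 1 t)‖) : ‖g.eval 0‖ ≤ trigLp p f := by
  rw [trigLp_eq_circleAverage p f (fun z ↦ g.eval z) hf,
    ← rpow_rpow_inv (norm_nonneg (g.eval 0)) hp.ne', ← one_div]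
  exact rpow_le_rpow (by positivity) (g.norm_eval_zero_rpow_le_circleAverage hp.le) (by positivity)

theorem trigLp_congr_norm (p : ℝ) {f g : ℝ → ℂ} (h : ∀ t, ‖f t‖ = ‖g t‖) :
    trigLp p f = trigLp p g := by
  simp only [trigLp, h]

theorem exp_I_mul_int_mul_eq_mul_circleMap_pow {m j : ℤ} (hmj : m ≤ j) (t : ℝ) :
    exp (I * j * t) = exp (I * m * t) * circleMap 0 1 t ^ (j - m).toNat := by
  rw [circleMap, ofReal_one, zero_add, one_mul, ← Complex.exp_nat_mul, ← Complex.exp_add]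
  congr 1
  have : (((j - m).toNat : ℤ) : ℂ) = (j : ℂ) - m := by
    rw [Int.toNat_of_nonneg (by omega)]; push_cast; ring
  rw [← Int.cast_natCast, this]
  ring

theorem norm_first_coeff_le_trigLp {p : ℝ} (hp : 0 < p) {m n : ℤ} (hmn : m ≤ n) (a : ℤ → ℂ) :
    ‖a m‖ ≤ trigLp p (fun t ↦ ∑ j ∈ Icc m n, a j * exp (I * j * t)) := by
  set g : ℂ[X] := ∑ j ∈ Icc m n, C (a j) * X ^ (j - m).toNat
  have hg0 : g.eval 0 = a m := by
    rw [eval_finsetSum, sum_eq_single_of_mem m (by simp [hmn])]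
    · simp
    · intro j hj hjm
      have : (j - m).toNat ≠ 0 := by simp only [mem_Icc] at hj; omega
      simp [this]
  rw [← hg0]
  refine norm_eval_zero_le_trigLp hp g fun t ↦ ?_
  have hcirc : ∀ j ∈ Icc m n, a j * exp (I * j * t)
      = exp (I * m * t) * (a j * circleMap 0 1 t ^ (j - m).toNat) := fun j hj ↦ by
    rw [exp_I_mul_int_mul_eq_mul_circleMap_pow (mem_Icc.mp hj).1]; ring
  have hunit : ‖exp (I * m * t)‖ = 1 := by
    rw [show I * m * t = ((m * t : ℝ) : ℂ) * I by push_cast; ring, norm_exp_ofReal_mul_I]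
  rw [sum_congr rfl hcirc, ← mul_sum, norm_mul, hunit, one_mul]
  simp [g, eval_finsetSum]

theorem sum_Icc_neg_conj (m n : ℤ) (a : ℤ → ℂ) (t : ℝ) :
    ∑ j ∈ Icc (-n) (-m), conj (a (-j)) * exp (I * j * t)
      = conj (∑ j ∈ Icc m n, a j * exp (I * j * t)) := by
  rw [map_sum]
  refine sum_nbij' (fun j ↦ -j) (fun j ↦ -j) ?_ ?_ (by simp) (by simp) fun j _ ↦ ?_
  iterate 2 intro j hj; simp only [mem_Icc, neg_le_neg_iff] at hj ⊢; omega
  simp [← exp_conj]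

/-- Let `0 < p < ∞`, let `m ≤ n` be integers and let
`f(z) = ∑_{j=m}^{n} f̂(j) z^j` be a trigonometric polynomial (the exponents may be
negative).  Then `|f̂(m)| ≤ ‖f‖_{L^p}` and `|f̂(n)| ≤ ‖f‖_{L^p}`. -/
theorem first_and_last_coefficient_estimate (p : ℝ) (hp : 0 < p)
    (m n : ℤ) (hmn : m ≤ n) (a : ℤ → ℂ) :
    ‖a m‖ ≤ trigLp p (fun t => ∑ j ∈ Finset.Icc m n,
        a j * Complex.exp (Complex.I * (j : ℂ) * (t : ℂ))) ∧
    ‖a n‖ ≤ trigLp p (fun t => ∑ j ∈ Finset.Icc m n,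
        a j * Complex.exp (Complex.I * (j : ℂ) * (t : ℂ))) := by
  refine ⟨norm_first_coeff_le_trigLp hp hmn a, ?_⟩
  have h := norm_first_coeff_le_trigLp hp (neg_le_neg hmn) fun j ↦ conj (a (-j))
  simp_rw [neg_neg, norm_conj, sum_Icc_neg_conj] at h
  exact h.trans_eq (trigLp_congr_norm p fun t ↦ norm_conj _)
end

section
/- Let 0<p<1. There exists a positive constant C (depending on p and on the choice of the function v) such that for every positive integer k, 1 ≤ ‖D^+_{2^k+1} * V_k‖_{L^p} ≤ C, where D^+_{2^k+1}(z) = Σ_{j=0}^{2^k} z^j is the analytic Dirichlet kernel and (D^+_{2^k+1} * V_k)(z) = Σ_{j=0}^{2^k} v(j/2^k) z^j. -/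
open scoped BigOperators

/-- The complex absolute value, as an `AbsoluteValue` (compatibility). -/
noncomputable def Complex.abs : AbsoluteValue ℂ ℝ := NormedField.toAbsoluteValue ℂ

lemma Complex.norm_eq_abs (z : ℂ) : ‖z‖ = Complex.abs z := rfl

lemma Complex.abs_exp (z : ℂ) : Complex.abs (Complex.exp z) = Real.exp z.re := Complex.norm_exp z

lemma Complex.abs_ofReal (x : ℝ) : Complex.abs (x : ℂ) = |x| := Complex.norm_real x

lemma Complex.abs_conj (z : ℂ) : Complex.abs ((starRingEnd ℂ) z) = Complex.abs z := Complex.norm_conj z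

lemma Complex.continuous_abs : Continuous (fun z : ℂ => Complex.abs z) := continuous_norm

lemma Complex.abs_re_le_abs (z : ℂ) : |z.re| ≤ Complex.abs z := Complex.abs_re_le_norm z

lemma Complex.sq_abs (z : ℂ) : Complex.abs z ^ 2 = Complex.normSq z := Complex.sq_norm z

lemma Complex.normSq_eq_abs (z : ℂ) : Complex.normSq z = Complex.abs z ^ 2 := Complex.normSq_eq_norm_sq z

lemma abs_circleMap_zero (R θ : ℝ) : Complex.abs (circleMap 0 R θ) = |R| := norm_circleMap_zero R θ

open intervalIntegral in
lemma mv_core (p : ℝ) (hp : 0 < p) (n : ℕ) (w : Fin n → ℂ) (hw : ∀ i, Complex.abs (w i) ≤ 1)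
    (ρ : ℝ) (hρ0 : 0 < ρ) (hρ1 : ρ < 1) :
    2 * Real.pi ≤ ∫ t in (0:ℝ)..(2*Real.pi),
      ∏ i, Complex.abs (1 + w i * (ρ * Complex.exp (t * Complex.I))) ^ p := by
  set H : ℂ → ℂ := fun z => Complex.exp ((p:ℂ) * ∑ i, Complex.log (1 + w i * z)) with hH
  have hre : ∀ z : ℂ, Complex.abs z < 1 → ∀ i : Fin n, 0 < (1 + w i * z).re := by
    intro z hz i
    have h1 : Complex.abs (w i * z) < 1 := by
      rw [map_mul]
      calc Complex.abs (w i) * Complex.abs z ≤ 1 * Complex.abs z := by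
            exact mul_le_mul_of_nonneg_right (hw i) (Complex.abs.nonneg z)
        _ < 1 := by simpa using hz
    have h2 : |(w i * z).re| ≤ Complex.abs (w i * z) := Complex.abs_re_le_abs _
    have : (1 + w i * z).re = 1 + (w i * z).re := by simp
    rw [this]
    have := abs_le.mp h2
    linarith
  have hslit : ∀ z : ℂ, Complex.abs z < 1 → ∀ i : Fin n, (1 + w i * z) ∈ Complex.slitPlane := by
    intro z hz i
    exact Complex.mem_slitPlane_iff.mpr (Or.inl (hre z hz i))
  have hdiff : ∀ z ∈ Metric.ball (0:ℂ) 1, DifferentiableAt ℂ H z := by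
    intro z hz
    rw [Metric.mem_ball, dist_zero_right] at hz
    apply DifferentiableAt.cexp
    apply DifferentiableAt.const_mul
    apply DifferentiableAt.fun_sum
    intro i _
    exact DifferentiableAt.clog (by fun_prop) (hslit z hz i)
  have hsub : Metric.closedBall (0:ℂ) ρ ⊆ Metric.ball (0:ℂ) 1 := by
    intro z hz
    rw [Metric.mem_closedBall, dist_zero_right] at hz
    rw [Metric.mem_ball, dist_zero_right]
    exact lt_of_le_of_lt hz hρ1
  have hC : DiffContOnCl ℂ H (Metric.ball (0:ℂ) ρ) := by
    apply DifferentiableOn.diffContOnCl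
    rw [closure_ball (0:ℂ) hρ0.ne']
    exact fun z hz => (hdiff z (hsub hz)).differentiableWithinAt
  have hcauchy := hC.circleIntegral_sub_inv_smul (w := 0) (Metric.mem_ball_self hρ0)
  rw [circleIntegral] at hcauchy
  simp only [deriv_circleMap, sub_zero, smul_eq_mul] at hcauchy
  have hne : ∀ t : ℝ, circleMap 0 ρ t ≠ 0 := fun t => circleMap_ne_center hρ0.ne'
  have hker : ∀ t : ℝ, circleMap 0 ρ t * Complex.I * ((circleMap 0 ρ t)⁻¹ * H (circleMap 0 ρ t))
      = Complex.I * H (circleMap 0 ρ t) := by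
    intro t
    field_simp [hne t]
  rw [intervalIntegral.integral_congr (g := fun t => Complex.I * H (circleMap 0 ρ t))
    (fun t _ => hker t)] at hcauchy
  rw [intervalIntegral.integral_const_mul] at hcauchy
  have hH0 : H 0 = 1 := by simp [hH]
  have hint : (∫ t in (0:ℝ)..(2*Real.pi), H (circleMap 0 ρ t)) = 2 * Real.pi := by
    have hI : (Complex.I : ℂ) ≠ 0 := Complex.I_ne_zero
    apply mul_left_cancel₀ hI
    rw [hcauchy, hH0]; ring
  have habs : ∀ t : ℝ, Complex.abs (H (circleMap 0 ρ t))
      = ∏ i, Complex.abs (1 + w i * (ρ * Complex.exp (t * Complex.I))) ^ p := by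
    intro t
    have hcm : circleMap 0 ρ t = (ρ:ℂ) * Complex.exp (t * Complex.I) := circleMap_zero ρ t
    have hz1 : Complex.abs (circleMap 0 ρ t) = ρ := by
      rw [abs_circleMap_zero]; exact abs_of_pos hρ0
    have hzlt : Complex.abs (circleMap 0 ρ t) < 1 := by rw [hz1]; exact hρ1
    rw [hH]
    simp only [Complex.abs_exp]
    have hre2 : ((p:ℂ) * ∑ i, Complex.log (1 + w i * circleMap 0 ρ t)).re
        = p * ∑ i, Real.log (Complex.abs (1 + w i * circleMap 0 ρ t)) := by
      rw [Complex.mul_re]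
      simp only [Complex.ofReal_re, Complex.ofReal_im, zero_mul, sub_zero]
      congr 1
      rw [Complex.re_sum]
      exact Finset.sum_congr rfl fun i _ => Complex.log_re _
    rw [hre2, Finset.mul_sum, Real.exp_sum]
    apply Finset.prod_congr rfl
    intro i _
    have hpos : 0 < Complex.abs (1 + w i * circleMap 0 ρ t) := by
      have := hre (circleMap 0 ρ t) hzlt i
      have h0 : (1 + w i * circleMap 0 ρ t) ≠ 0 := by
        intro h; rw [h] at this; simp at this
      exact Complex.abs.pos h0
    rw [Real.rpow_def_of_pos]
    · rw [hcm]; ring_nf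
    · rw [← hcm]; exact hpos
  calc 2 * Real.pi = Complex.abs ((2 * Real.pi : ℝ) : ℂ) := by
        rw [Complex.abs_ofReal]; exact (abs_of_pos (by positivity)).symm
    _ = Complex.abs (∫ t in (0:ℝ)..(2*Real.pi), H (circleMap 0 ρ t)) := by
        rw [hint]; norm_num
    _ ≤ ∫ t in (0:ℝ)..(2*Real.pi), Complex.abs (H (circleMap 0 ρ t)) := by
        rw [← Complex.norm_eq_abs]
        refine le_trans (intervalIntegral.norm_integral_le_integral_norm (by positivity)) ?_
        apply le_of_eq
        exact intervalIntegral.integral_congr fun t _ => Complex.norm_eq_abs _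
    _ = ∫ t in (0:ℝ)..(2*Real.pi), ∏ i, Complex.abs (1 + w i * (ρ * Complex.exp (t * Complex.I))) ^ p := by
        exact intervalIntegral.integral_congr fun t _ => habs t

lemma mv_circle (p : ℝ) (hp : 0 < p) (n : ℕ) (w : Fin n → ℂ)
    (hw : ∀ i, Complex.abs (w i) ≤ 1) :
    2 * Real.pi ≤ ∫ t in (0:ℝ)..(2*Real.pi),
      ∏ i, Complex.abs (1 + w i * Complex.exp (t * Complex.I)) ^ p := by
  set F : ℝ → ℝ → ℝ := fun ρ t => ∏ i, Complex.abs (1 + w i * (ρ * Complex.exp (t * Complex.I))) ^ p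
    with hFdef
  have hexp : Continuous fun t : ℝ => Complex.exp ((t:ℂ) * Complex.I) :=
    Complex.continuous_exp.comp (Complex.continuous_ofReal.mul continuous_const)
  have hFt : ∀ ρ : ℝ, Continuous fun t => F ρ t := by
    intro ρ
    apply continuous_finset_prod
    intro i _
    refine Continuous.rpow_const ?_ fun _ => Or.inr hp.le
    exact Complex.continuous_abs.comp
      (continuous_const.add (continuous_const.mul (continuous_const.mul hexp)))
  have hbound : ∀ ρ ∈ Set.Ioo (0:ℝ) 1, ∀ t : ℝ, ‖F ρ t‖ ≤ ((2:ℝ)^p)^n := by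
    intro ρ hρ t
    have h1 : ∀ i : Fin n, Complex.abs (1 + w i * (ρ * Complex.exp (t * Complex.I))) ^ p ≤ (2:ℝ)^p := by
      intro i
      apply Real.rpow_le_rpow (Complex.abs.nonneg _) _ hp.le
      calc Complex.abs (1 + w i * (ρ * Complex.exp (t * Complex.I)))
          ≤ Complex.abs 1 + Complex.abs (w i * (ρ * Complex.exp (t * Complex.I))) :=
            Complex.abs.add_le _ _
        _ ≤ 1 + 1 := by
            rw [map_one]
            apply add_le_add_right
            rw [map_mul, map_mul, Complex.abs_ofReal, Complex.abs_exp]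
            have : ((t:ℂ) * Complex.I).re = 0 := by simp
            rw [this, Real.exp_zero]
            calc Complex.abs (w i) * (|ρ| * 1) ≤ 1 * (1 * 1) := by
                  apply mul_le_mul (hw i) _ (by positivity) zero_le_one
                  rw [mul_one, one_mul, abs_of_pos hρ.1]
                  exact hρ.2.le
              _ = 1 := by ring
        _ = 2 := by norm_num
    rw [Real.norm_eq_abs, abs_of_nonneg (Finset.prod_nonneg fun i _ => Real.rpow_nonneg (Complex.abs.nonneg _) _)]
    calc F ρ t ≤ ∏ _i : Fin n, (2:ℝ)^p := by
          apply Finset.prod_le_prod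
          · exact fun i _ => Real.rpow_nonneg (Complex.abs.nonneg _) _
          · exact fun i _ => h1 i
      _ = ((2:ℝ)^p)^n := by
          rw [Finset.prod_const, Finset.card_univ, Fintype.card_fin]
  have hlim : ∀ t : ℝ, Filter.Tendsto (fun ρ => F ρ t) (nhdsWithin 1 (Set.Iio 1))
      (nhds (∏ i, Complex.abs (1 + w i * Complex.exp (t * Complex.I)) ^ p)) := by
    intro t
    have hc : Continuous fun ρ : ℝ => F ρ t := by
      apply continuous_finset_prod
      intro i _
      refine Continuous.rpow_const ?_ fun _ => Or.inr hp.le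
      exact Complex.continuous_abs.comp
        (continuous_const.add (continuous_const.mul
          ((Complex.continuous_ofReal.mul continuous_const)))) 
    have h1 : F 1 t = ∏ i, Complex.abs (1 + w i * Complex.exp (t * Complex.I)) ^ p := by
      simp [hFdef]
    rw [← h1]
    exact (hc.tendsto 1).mono_left nhdsWithin_le_nhds
  have htend : Filter.Tendsto (fun ρ => ∫ t in (0:ℝ)..(2*Real.pi), F ρ t)
      (nhdsWithin 1 (Set.Iio 1))
      (nhds (∫ t in (0:ℝ)..(2*Real.pi), ∏ i, Complex.abs (1 + w i * Complex.exp (t * Complex.I)) ^ p)) := by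
    apply intervalIntegral.tendsto_integral_filter_of_dominated_convergence
      (bound := fun _ => ((2:ℝ)^p)^n)
    · filter_upwards with ρ
      exact (hFt ρ).aestronglyMeasurable
    · have hev : ∀ᶠ ρ in nhdsWithin (1:ℝ) (Set.Iio 1), ρ ∈ Set.Ioo (0:ℝ) 1 :=
        Ioo_mem_nhdsLT_of_mem (by constructor <;> norm_num)
      filter_upwards [hev] with ρ hρ
      filter_upwards with t _
      exact hbound ρ hρ t
    · exact intervalIntegrable_const
    · filter_upwards with t _
      exact hlim t
  apply ge_of_tendsto htend
  have hev : ∀ᶠ ρ in nhdsWithin (1:ℝ) (Set.Iio 1), ρ ∈ Set.Ioo (0:ℝ) 1 :=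
    Ioo_mem_nhdsLT_of_mem (by constructor <;> norm_num)
  filter_upwards [hev] with ρ hρ
  exact mv_core p hp n w hw ρ hρ.1 hρ.2

lemma hardy_poly (p : ℝ) (hp : 0 < p) (Q : Polynomial ℂ) :
    Complex.abs (Q.eval 0) ^ p ≤
      (1 / (2 * Real.pi)) * ∫ t in (0:ℝ)..(2*Real.pi),
        Complex.abs (Q.eval (Complex.exp (t * Complex.I))) ^ p := by
  classical
  have hsplit := (Polynomial.C_leadingCoeff_mul_prod_multiset_X_sub_C (IsAlgClosed.card_roots_eq_natDegree (p := Q))).symm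
  set l : List ℂ := Q.roots.toList with hl
  set n : ℕ := l.length with hn
  set r : Fin n → ℂ := l.get with hr
  have hroots : Q.roots = (l : Multiset ℂ) := (Q.roots.coe_toList).symm
  have heval : ∀ z : ℂ, Q.eval z = Q.leadingCoeff * ∏ i, (z - r i) := by
    intro z
    conv_lhs => rw [hsplit]
    rw [Polynomial.eval_mul, Polynomial.eval_C, Polynomial.eval_multiset_prod, Multiset.map_map]
    congr 1
    have : (Polynomial.eval z ∘ fun a => Polynomial.X - Polynomial.C a) = fun a : ℂ => z - a := by
      funext a; simp
    rw [this, hroots]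
    have hofn : l = List.ofFn r := (List.ofFn_get l).symm
    rw [Multiset.map_coe, Multiset.prod_coe]
    conv_lhs => rw [hofn]
    rw [List.map_ofFn, List.prod_ofFn]
    simp [Function.comp]
  set β : Fin n → ℂ := fun i => if 1 ≤ Complex.abs (r i) then -r i else 1 with hβdef
  set w : Fin n → ℂ := fun i =>
    if 1 ≤ Complex.abs (r i) then -(r i)⁻¹ else -(starRingEnd ℂ) (r i) with hwdef
  have hw : ∀ i, Complex.abs (w i) ≤ 1 := by
    intro i
    rw [hwdef]
    by_cases h : 1 ≤ Complex.abs (r i)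
    · simp only [h, if_true, map_neg_eq_map, map_inv₀]
      exact inv_le_one_of_one_le₀ h
    · simp only [h, if_false, map_neg_eq_map, Complex.abs_conj]
      exact (not_le.mp h).le
  have hfac : ∀ (i : Fin n) (z : ℂ), Complex.abs z = 1 →
      Complex.abs (z - r i) = Complex.abs (β i) * Complex.abs (1 + w i * z) := by
    intro i z hz
    rw [hβdef, hwdef]
    by_cases h : 1 ≤ Complex.abs (r i)
    · simp only [h, if_true]
      have hr0 : r i ≠ 0 := by
        intro h0; rw [h0] at h; simp at h; exact absurd h (by norm_num)
      rw [← map_mul]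
      congr 1
      field_simp
      ring
    · simp only [h, if_false, map_one, one_mul]
      have h1 : (starRingEnd ℂ) z * z = 1 := by
        rw [mul_comm, Complex.mul_conj, Complex.normSq_eq_abs, hz]
        norm_num
      have h3 : (starRingEnd ℂ) (1 - (starRingEnd ℂ) (r i) * z)
          = (starRingEnd ℂ) z * (z - r i) := by
        rw [map_sub, map_mul, Complex.conj_conj, map_one]
        linear_combination -h1
      have h4 : Complex.abs (1 + -(starRingEnd ℂ) (r i) * z) = Complex.abs (z - r i) := by
        rw [show (1 + -(starRingEnd ℂ) (r i) * z) = 1 - (starRingEnd ℂ) (r i) * z by ring,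
          ← Complex.abs_conj (1 - (starRingEnd ℂ) (r i) * z)]
        rw [h3, map_mul, Complex.abs_conj, hz, one_mul]
      exact h4.symm
  have hβge : ∀ i, Complex.abs (0 - r i) ≤ Complex.abs (β i) := by
    intro i
    rw [hβdef, zero_sub, map_neg_eq_map]
    by_cases h : 1 ≤ Complex.abs (r i)
    · simp [h]
    · simp only [h, if_false, map_one]
      exact (not_le.mp h).le
  set B : ℝ := Complex.abs Q.leadingCoeff * ∏ i, Complex.abs (β i) with hB
  have hBnn : 0 ≤ B := by
    apply mul_nonneg (Complex.abs.nonneg _)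
    exact Finset.prod_nonneg fun i _ => Complex.abs.nonneg _
  have step1 : Complex.abs (Q.eval 0) ≤ B := by
    rw [heval 0, map_mul]
    apply mul_le_mul_of_nonneg_left _ (Complex.abs.nonneg _)
    rw [map_prod]
    exact Finset.prod_le_prod (fun i _ => Complex.abs.nonneg _) fun i _ => hβge i
  have step2 : ∀ t : ℝ, Complex.abs (Q.eval (Complex.exp (t * Complex.I))) ^ p
      = B ^ p * ∏ i, Complex.abs (1 + w i * Complex.exp (t * Complex.I)) ^ p := by
    intro t
    have hz : Complex.abs (Complex.exp ((t:ℂ) * Complex.I)) = 1 := by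
      rw [Complex.abs_exp]
      simp
    have h1 : Complex.abs (Q.eval (Complex.exp (t * Complex.I)))
        = B * ∏ i, Complex.abs (1 + w i * Complex.exp (t * Complex.I)) := by
      rw [heval, map_mul, map_prod]
      rw [Finset.prod_congr rfl fun i _ => hfac i _ hz]
      rw [Finset.prod_mul_distrib, hB]
      ring
    rw [h1, Real.mul_rpow hBnn (Finset.prod_nonneg fun i _ => Complex.abs.nonneg _)]
    congr 1
    exact (Real.finset_prod_rpow Finset.univ _ (fun i _ => Complex.abs.nonneg _) p).symm
  rw [intervalIntegral.integral_congr fun t _ => step2 t]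
  rw [intervalIntegral.integral_const_mul]
  have hmv := mv_circle p hp n w hw
  have hπ : 0 < 2 * Real.pi := by positivity
  calc Complex.abs (Q.eval 0) ^ p ≤ B ^ p :=
        Real.rpow_le_rpow (Complex.abs.nonneg _) step1 hp.le
    _ = B ^ p * 1 := by ring
    _ ≤ B ^ p * ((1 / (2 * Real.pi)) *
          ∫ t in (0:ℝ)..(2*Real.pi), ∏ i, Complex.abs (1 + w i * Complex.exp (t * Complex.I)) ^ p) := by
        apply mul_le_mul_of_nonneg_left _ (Real.rpow_nonneg hBnn p)
        have hpos : (0:ℝ) < 1 / (2 * Real.pi) := by positivity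
        have := mul_le_mul_of_nonneg_left hmv hpos.le
        calc (1:ℝ) = (1 / (2 * Real.pi)) * (2 * Real.pi) := by field_simp
          _ ≤ _ := this
    _ = (1 / (2 * Real.pi)) * (B ^ p *
          ∫ t in (0:ℝ)..(2*Real.pi), ∏ i, Complex.abs (1 + w i * Complex.exp (t * Complex.I)) ^ p) := by
        ring

lemma abel_identity (c : ℕ → ℂ) (z : ℂ) (N : ℕ) :
    (1 - z) * ∑ j ∈ Finset.range (N+1), c j * z^j
      = c 0 + (∑ j ∈ Finset.range N, (c (j+1) - c j) * z^(j+1)) - c N * z^(N+1) := by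
  induction N with
  | zero => simp; ring
  | succ N ih =>
    rw [Finset.sum_range_succ (fun j => c j * z^j), mul_add, ih,
      Finset.sum_range_succ (fun j => (c (j+1) - c j) * z^(j+1))]
    ring

lemma jordan_lower (t : ℝ) (h0 : 0 ≤ t) (hπ : t ≤ Real.pi) :
    2 / Real.pi * t ≤ Complex.abs (1 - Complex.exp (Complex.I * t)) := by
  have hcos : Real.cos t ≤ 1 - 2 / Real.pi ^ 2 * t ^ 2 :=
    Real.cos_le_one_sub_mul_cos_sq (by rwa [abs_of_nonneg h0])
  have hexp : Complex.exp (Complex.I * t) = (Real.cos t : ℂ) + (Real.sin t : ℂ) * Complex.I := by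
    rw [mul_comm, Complex.exp_mul_I, Complex.ofReal_cos, Complex.ofReal_sin]
  have hsq : Complex.abs (1 - Complex.exp (Complex.I * t)) ^ 2 = 2 - 2 * Real.cos t := by
    rw [hexp, Complex.sq_abs, Complex.normSq_apply]
    simp only [Complex.sub_re, Complex.sub_im, Complex.one_re, Complex.one_im,
      Complex.add_re, Complex.add_im, Complex.ofReal_re, Complex.ofReal_im,
      Complex.mul_re, Complex.mul_im, Complex.I_re, Complex.I_im]
    ring_nf
    linear_combination Real.sin_sq_add_cos_sq t
  have habs : 0 ≤ Complex.abs (1 - Complex.exp (Complex.I * t)) := Complex.abs.nonneg _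
  have hπpos := Real.pi_pos
  have h2 : (2/Real.pi * t)^2 ≤ Complex.abs (1 - Complex.exp (Complex.I * t)) ^ 2 := by
    rw [hsq]
    have he : (2/Real.pi * t)^2 = 2 * (2 / Real.pi ^ 2 * t ^ 2) := by
      field_simp
    rw [he]; linarith
  calc 2/Real.pi * t = Real.sqrt ((2/Real.pi * t)^2) := (Real.sqrt_sq (by positivity)).symm
    _ ≤ Real.sqrt (Complex.abs (1 - Complex.exp (Complex.I * t)) ^ 2) := Real.sqrt_le_sqrt h2
    _ = _ := Real.sqrt_sq habs

set_option maxHeartbeats 1000000 in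
/-- Let `0 < p < 1` and let `v` be an infinitely differentiable
function on `(0,∞)` with `v ≥ 0`, `supp v = [1/2, 2]`,
`∑_{j≥0} v(2^{−j} x) = 1` for `x ≥ 1` (in particular `v(1) = 1`).  Then there is
`C > 0` (depending on `p` and `v`) such that for every positive integer `k`,
`1 ≤ ‖D^+_{2^k+1} * V_k‖_{L^p} ≤ C`, where
`(D^+_{2^k+1} * V_k)(z) = ∑_{j=0}^{2^k} v(j/2^k) z^j`. -/
theorem dirichlet_littlewood_paley_block_bounded (p : ℝ) (hp0 : 0 < p) (hp1 : p < 1)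
    (v : ℝ → ℝ) (hv_smooth : ContDiffOn ℝ (⊤ : ℕ∞) v (Set.Ioi 0))
    (hv_nonneg : ∀ x, 0 ≤ v x)
    (hv_supp : tsupport v = Set.Icc (1 / 2 : ℝ) 2)
    (hv_sum : ∀ x : ℝ, 1 ≤ x → ∑' j : ℕ, v (x / 2 ^ j) = 1)
    (hv_one : v 1 = 1) :
    ∃ C : ℝ, 0 < C ∧ ∀ k : ℕ, 1 ≤ k →
      1 ≤ trigLp p (fun t => ∑ j ∈ Finset.range (2 ^ k + 1),
            ((v ((j : ℝ) / 2 ^ k) : ℝ) : ℂ) * Complex.exp (Complex.I * (j : ℂ) * (t : ℂ))) ∧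
      trigLp p (fun t => ∑ j ∈ Finset.range (2 ^ k + 1),
            ((v ((j : ℝ) / 2 ^ k) : ℝ) : ℂ) * Complex.exp (Complex.I * (j : ℂ) * (t : ℂ))) ≤ C := by
  have hπpos := Real.pi_pos
  have hπgt : (3:ℝ) < Real.pi := Real.pi_gt_three
  -- v vanishes on (-∞, 1/2]
  have hv0 : ∀ x : ℝ, x ≤ 1/2 → v x = 0 := by
    intro x hx
    rcases lt_or_eq_of_le hx with hlt | heq
    · apply image_eq_zero_of_notMem_tsupport
      rw [hv_supp]
      intro hmem
      exact absurd hmem.1 (not_le.mpr hlt)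
    · subst heq
      by_contra hne
      have hc : ContinuousAt v (1/2 : ℝ) :=
        (hv_smooth.continuousOn.continuousAt (Ioi_mem_nhds (by norm_num)))
      have hev : ∀ᶠ y in nhds (1/2 : ℝ), v y ≠ 0 := hc.eventually_ne hne
      have hev2 : ∀ᶠ y in nhdsWithin (1/2 : ℝ) (Set.Iio (1/2 : ℝ)), v y ≠ 0 :=
        hev.filter_mono nhdsWithin_le_nhds
      have hev3 : ∀ᶠ y in nhdsWithin (1/2 : ℝ) (Set.Iio (1/2 : ℝ)), y ∈ Set.Iio (1/2 : ℝ) :=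
        eventually_mem_nhdsWithin
      obtain ⟨y, hy1, hy2⟩ := (hev2.and hev3).exists
      have hmem : y ∈ tsupport v := subset_tsupport v hy1
      rw [hv_supp] at hmem
      exact absurd hmem.1 (not_le.mpr hy2)
  -- v ≤ 1
  have hv1 : ∀ x : ℝ, v x ≤ 1 := by
    intro x
    rcases le_or_gt x (1/2) with hx | hx
    · rw [hv0 x hx]; norm_num
    · have h2x : (1:ℝ) ≤ 2*x := by linarith
      have hsum := hv_sum (2*x) h2x
      have hsummable : Summable (fun j : ℕ => v ((2*x) / 2^j)) := by
        by_contra hns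
        rw [tsum_eq_zero_of_not_summable hns] at hsum
        norm_num at hsum
      have hle := Summable.le_tsum hsummable 1 (fun j _ => hv_nonneg _)
      rw [hsum] at hle
      calc v x = v ((2*x)/2^1) := by norm_num
        _ ≤ 1 := hle
  -- Lipschitz constant on [1/4, 1]
  have hdiffat : ∀ x ∈ Set.Icc (1/4:ℝ) 1, DifferentiableAt ℝ v x := by
    intro x hx
    have hx0 : (0:ℝ) < x := lt_of_lt_of_le (by norm_num) hx.1
    exact ((hv_smooth.contDiffAt (Ioi_mem_nhds hx0)).differentiableAt (by simp))
  have hderiv_cont : ContinuousOn (deriv v) (Set.Icc (1/4:ℝ) 1) := by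
    apply ContinuousOn.mono _ (by intro x hx; exact lt_of_lt_of_le (by norm_num) hx.1 :
      Set.Icc (1/4:ℝ) 1 ⊆ Set.Ioi 0)
    exact hv_smooth.continuousOn_deriv_of_isOpen isOpen_Ioi (by simp)
  obtain ⟨L, hLbd⟩ := isCompact_Icc.exists_bound_of_continuousOn hderiv_cont
  have hL0 : 0 ≤ L := le_trans (norm_nonneg _) (hLbd (1/4) (by constructor <;> norm_num))
  have hlip : ∀ x ∈ Set.Icc (1/4:ℝ) 1, ∀ y ∈ Set.Icc (1/4:ℝ) 1,
      |v y - v x| ≤ L * |y - x| := by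
    intro x hx y hy
    have := (convex_Icc (1/4:ℝ) 1).norm_image_sub_le_of_norm_deriv_le hdiffat hLbd hx hy
    simpa [Real.norm_eq_abs] using this
  set M : ℝ := L + 1 with hM
  -- the constant
  set D : ℝ := 2 * (2 + (M * Real.pi / 2)^p * (Real.pi / (1 - p))) with hD
  have hDnn : 0 ≤ D := by
    rw [hD]
    have : (0:ℝ) ≤ (M * Real.pi / 2)^p := Real.rpow_nonneg (by positivity) p
    have h1p : (0:ℝ) < 1 - p := by linarith
    positivity
  refine ⟨(max 1 D) ^ (1/p), by positivity, ?_⟩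
  intro k hk
  -- setup
  set N : ℕ := 2^k with hN
  have hN2 : (2:ℕ) ≤ N := by
    rw [hN]
    calc (2:ℕ) = 2^1 := by norm_num
      _ ≤ 2^k := Nat.pow_le_pow_right (by norm_num) hk
  have hNpos : (0:ℝ) < (2:ℝ)^k := by positivity
  set c : ℕ → ℝ := fun j => v ((j:ℝ) / 2^k) with hc
  set F : ℝ → ℂ := fun t => ∑ j ∈ Finset.range (N+1),
    ((c j : ℝ) : ℂ) * Complex.exp (Complex.I * (j:ℂ) * (t:ℂ)) with hF
  have hcN : c N = 1 := by
    rw [hc]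
    simp only [hN]
    push_cast
    rw [div_self hNpos.ne']
    exact hv_one
  have hc0 : c 0 = 0 := by
    rw [hc]
    simp only [Nat.cast_zero, zero_div]
    exact hv0 0 (by norm_num)
  have hcmem : ∀ j, 0 ≤ c j ∧ c j ≤ 1 := fun j => ⟨hv_nonneg _, hv1 _⟩
  -- exponential basics
  have hzabs : ∀ t : ℝ, Complex.abs (Complex.exp ((t:ℂ) * Complex.I)) = 1 := by
    intro t
    rw [Complex.abs_exp]
    simp
  have hpow : ∀ (t : ℝ) (j : ℕ),
      Complex.exp (Complex.I * (j:ℂ) * (t:ℂ)) = Complex.exp ((t:ℂ) * Complex.I) ^ j := by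
    intro t j
    rw [← Complex.exp_nat_mul]
    exact congrArg Complex.exp (by ring)
  -- continuity of F and of |F|^p
  have hFcont : Continuous F := by
    apply continuous_finset_sum
    intro j _
    exact continuous_const.mul (Complex.continuous_exp.comp (by continuity))
  have hgcont : Continuous (fun t => Complex.abs (F t) ^ p) := by
    refine Continuous.rpow_const (Complex.continuous_abs.comp hFcont) fun _ => Or.inr hp0.le
  set g : ℝ → ℝ := fun t => Complex.abs (F t) ^ p with hg
  have hgnn : ∀ t, 0 ≤ g t := fun t => Real.rpow_nonneg (Complex.abs.nonneg _) p
  -- ==================== LOWER BOUND ====================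
  set Q : Polynomial ℂ := ∑ j ∈ Finset.range (N+1),
    Polynomial.C ((c (N - j) : ℝ) : ℂ) * Polynomial.X ^ j with hQ
  have hQeval : ∀ z : ℂ, Q.eval z = ∑ j ∈ Finset.range (N+1), ((c (N-j) : ℝ) : ℂ) * z^j := by
    intro z
    rw [hQ, Polynomial.eval_finset_sum]
    exact Finset.sum_congr rfl fun j _ => by simp
  have hQ0 : Q.eval 0 = 1 := by
    rw [hQeval]
    rw [Finset.sum_eq_single_of_mem 0 (Finset.mem_range.mpr (Nat.succ_pos N))]
    · simp [hcN]
    · intro j _ hj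
      simp [zero_pow hj]
  have hQcirc : ∀ t : ℝ, Complex.abs (Q.eval (Complex.exp ((t:ℂ) * Complex.I)))
      = Complex.abs (F t) := by
    intro t
    set zz : ℂ := Complex.exp ((t:ℂ) * Complex.I) with hzz
    have hz1 : Complex.abs zz = 1 := hzabs t
    have hzne : zz ≠ 0 := by
      intro h; rw [h] at hz1; simp at hz1
    have hconj : (starRingEnd ℂ) zz = zz⁻¹ := (Complex.inv_eq_conj hz1).symm
    have hrefl : ∑ j ∈ Finset.range (N+1), ((c (N-j) : ℝ) : ℂ) * zz^j
        = ∑ j ∈ Finset.range (N+1), ((c j : ℝ) : ℂ) * zz^(N-j) := by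
      have h := Finset.sum_range_reflect (fun j => ((c j : ℝ) : ℂ) * zz^(N-j)) (N+1)
      rw [← h]
      apply Finset.sum_congr rfl
      intro j hj
      have hjN : j ≤ N := Nat.lt_succ_iff.mp (Finset.mem_range.mp hj)
      simp only [Nat.add_sub_cancel]
      rw [Nat.sub_sub_self hjN]
    have hterm : ∀ j ∈ Finset.range (N+1), ((c j : ℝ) : ℂ) * zz^(N-j)
        = zz^N * ((starRingEnd ℂ) (((c j : ℝ) : ℂ) * zz^j)) := by
      intro j hj
      have hjN : j ≤ N := Nat.lt_succ_iff.mp (Finset.mem_range.mp hj)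
      rw [map_mul, map_pow, hconj, Complex.conj_ofReal, inv_pow]
      have hpow2 : zz^(N - j) * zz^j = zz^N := by
        rw [← pow_add, Nat.sub_add_cancel hjN]
      have hzj : (zz:ℂ)^j ≠ 0 := pow_ne_zero _ hzne
      field_simp
      linear_combination ((c j : ℝ) : ℂ) * hpow2
    rw [hQeval, hrefl, Finset.sum_congr rfl hterm, ← Finset.mul_sum, ← map_sum]
    rw [map_mul, map_pow, hz1, one_pow, one_mul, Complex.abs_conj]
    congr 1
    rw [hF]
    exact Finset.sum_congr rfl fun j _ => by rw [hpow t j]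
  have hlow : 1 ≤ (1 / (2 * Real.pi)) * ∫ t in (0:ℝ)..(2*Real.pi), g t := by
    have h := hardy_poly p hp0 Q
    rw [hQ0] at h
    simp only [map_one, Real.one_rpow] at h
    refine le_trans h (le_of_eq ?_)
    congr 1
    apply intervalIntegral.integral_congr
    intro t _
    simp only [hg]
    rw [hQcirc t]
  -- ==================== UPPER BOUND ====================
  have hFsum : ∀ t : ℝ, F t = ∑ j ∈ Finset.range (N+1),
      ((c j : ℝ):ℂ) * (Complex.exp ((t:ℂ) * Complex.I))^j := by
    intro t; rw [hF]; exact Finset.sum_congr rfl fun j _ => by rw [hpow t j]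
  -- total variation bound
  have hTV : ∑ j ∈ Finset.range N, |c (j+1) - c j| ≤ L := by
    have hterm : ∀ j ∈ Finset.range N, |c (j+1) - c j| ≤ L * ((2:ℝ)^k)⁻¹ := by
      intro j hj
      have hjN : j < N := Finset.mem_range.mp hj
      by_cases h2 : 2*(j+1) ≤ 2^k
      · have hcast : ((2:ℝ)*(j+1)) ≤ (2:ℝ)^k := by
          have := (Nat.cast_le (α := ℝ)).mpr h2
          push_cast at this
          convert this using 1 <;> push_cast <;> ring
        have e1 : c (j+1) = 0 := by
          simp only [hc]
          apply hv0
          rw [div_le_iff₀ hNpos]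
          push_cast
          linarith
        have e2 : c j = 0 := by
          simp only [hc]
          apply hv0
          rw [div_le_iff₀ hNpos]
          push_cast
          linarith
        rw [e1, e2]
        simp
        positivity
      · have hdvd : (2:ℕ) ∣ 2^k := dvd_pow_self 2 (by omega : k ≠ 0)
        have h2j : 2^k ≤ 2*j := by omega
        have h2jr : (2:ℝ)^k ≤ 2*(j:ℝ) := by
          have := (Nat.cast_le (α := ℝ)).mpr h2j
          push_cast at this
          linarith
        have hjup : ((j:ℝ)+1) ≤ (2:ℝ)^k := by
          have : j + 1 ≤ N := hjN
          have := (Nat.cast_le (α := ℝ)).mpr this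
          push_cast at this
          rw [hN] at this
          push_cast at this
          linarith
        have hx1 : ((j:ℝ))/2^k ∈ Set.Icc (1/4:ℝ) 1 := by
          constructor
          · rw [le_div_iff₀ hNpos]; linarith
          · rw [div_le_one hNpos]; linarith
        have hx2 : (((j:ℕ)+1:ℝ))/2^k ∈ Set.Icc (1/4:ℝ) 1 := by
          constructor
          · rw [le_div_iff₀ hNpos]; linarith
          · rw [div_le_one hNpos]; linarith
        have hl := hlip _ hx1 _ hx2
        have harg : c (j+1) = v (((j:ℝ)+1)/2^k) := by
          simp only [hc]; push_cast; ring_nf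
        have harg2 : c j = v ((j:ℝ)/2^k) := by simp only [hc]
        rw [harg, harg2]
        refine le_trans hl (le_of_eq ?_)
        congr 1
        have e : ((j:ℝ)+1)/2^k - (j:ℝ)/2^k = ((2:ℝ)^k)⁻¹ := by
          field_simp; ring
        rw [e, abs_of_nonneg (by positivity : (0:ℝ) ≤ ((2:ℝ)^k)⁻¹)]
    calc ∑ j ∈ Finset.range N, |c (j+1) - c j| ≤ ∑ _j ∈ Finset.range N, L * ((2:ℝ)^k)⁻¹ :=
          Finset.sum_le_sum hterm
      _ = (N:ℝ) * (L * ((2:ℝ)^k)⁻¹) := by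
          rw [Finset.sum_const, Finset.card_range, nsmul_eq_mul]
      _ = L := by
          rw [hN]; push_cast; field_simp
  -- Abel summation bound
  have hAbelB : ∀ t : ℝ, Complex.abs (1 - Complex.exp (Complex.I * (t:ℂ))) * Complex.abs (F t) ≤ M := by
    intro t
    have hzzc : Complex.exp (Complex.I * (t:ℂ)) = Complex.exp ((t:ℂ) * Complex.I) := by
      rw [mul_comm]
    set zz : ℂ := Complex.exp ((t:ℂ) * Complex.I) with hzzdef
    have hz1 : Complex.abs zz = 1 := hzabs t
    have hid := abel_identity (fun j => ((c j : ℝ):ℂ)) zz N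
    beta_reduce at hid
    rw [← hFsum t] at hid
    rw [hzzc, ← map_mul]
    rw [hid]
    have tri : ∀ A B C : ℂ, Complex.abs (A + B - C)
        ≤ Complex.abs A + Complex.abs B + Complex.abs C := by
      intro A B C
      simp only [← Complex.norm_eq_abs]
      calc ‖A + B - C‖ ≤ ‖A + B‖ + ‖C‖ := norm_sub_le _ _
        _ ≤ ‖A‖ + ‖B‖ + ‖C‖ := by have := norm_add_le A B; linarith
    refine le_trans (tri _ _ _) ?_
    have e0 : Complex.abs ((c 0 : ℝ):ℂ) = 0 := by rw [hc0]; simp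
    have eN : Complex.abs (((c N : ℝ):ℂ) * zz^(N+1)) = 1 := by
      rw [map_mul, map_pow, hz1, one_pow, mul_one, hcN]
      simp
    have eB : Complex.abs (∑ j ∈ Finset.range N, (((c (j+1) : ℝ):ℂ) - ((c j : ℝ):ℂ)) * zz^(j+1)) ≤ L := by
      calc Complex.abs (∑ j ∈ Finset.range N, (((c (j+1) : ℝ):ℂ) - ((c j : ℝ):ℂ)) * zz^(j+1))
          = ‖∑ j ∈ Finset.range N, (((c (j+1) : ℝ):ℂ) - ((c j : ℝ):ℂ)) * zz^(j+1)‖ :=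
            (Complex.norm_eq_abs _).symm
        _ ≤ ∑ j ∈ Finset.range N, ‖(((c (j+1) : ℝ):ℂ) - ((c j : ℝ):ℂ)) * zz^(j+1)‖ :=
            norm_sum_le _ _
        _ = ∑ j ∈ Finset.range N, |c (j+1) - c j| := by
            apply Finset.sum_congr rfl
            intro j _
            rw [Complex.norm_eq_abs, map_mul, map_pow, hz1, one_pow, mul_one,
              ← Complex.ofReal_sub, Complex.abs_ofReal]
        _ ≤ L := hTV
    rw [hM]
    linarith
  -- crude bound
  have hBd1 : ∀ t : ℝ, Complex.abs (F t) ≤ (N:ℝ) + 1 := by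
    intro t
    calc Complex.abs (F t) = ‖F t‖ := (Complex.norm_eq_abs _).symm
      _ ≤ ∑ j ∈ Finset.range (N+1), ‖((c j : ℝ):ℂ) * Complex.exp (Complex.I * (j:ℂ) * (t:ℂ))‖ := by
          rw [hF]; exact norm_sum_le _ _
      _ ≤ ∑ _j ∈ Finset.range (N+1), (1:ℝ) := by
          apply Finset.sum_le_sum
          intro j _
          rw [norm_mul, Complex.norm_eq_abs, Complex.norm_eq_abs, Complex.abs_ofReal,
            Complex.abs_exp]
          have : (Complex.I * (j:ℂ) * (t:ℂ)).re = 0 := by simp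
          rw [this, Real.exp_zero, mul_one, abs_of_nonneg (hcmem j).1]
          exact (hcmem j).2
      _ = (N:ℝ) + 1 := by rw [Finset.sum_const, Finset.card_range, nsmul_eq_mul]; push_cast; ring
  -- symmetry
  have hsym : ∀ t : ℝ, g (2*Real.pi - t) = g t := by
    intro t
    have hFt : F (2*Real.pi - t) = (starRingEnd ℂ) (F t) := by
      rw [hF, map_sum]
      apply Finset.sum_congr rfl
      intro j _
      rw [map_mul, Complex.conj_ofReal]
      congr 1
      have h1 : Complex.I * (j:ℂ) * ((2*Real.pi - t : ℝ):ℂ)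
          = (j:ℂ) * (2*(Real.pi:ℂ)*Complex.I) + (-(Complex.I * (j:ℂ) * (t:ℂ))) := by
        push_cast; ring
      rw [h1, Complex.exp_add, Complex.exp_nat_mul_two_pi_mul_I, one_mul, Complex.exp_neg]
      have habsj : Complex.abs (Complex.exp (Complex.I * (j:ℂ) * (t:ℂ))) = 1 := by
        rw [Complex.abs_exp]
        simp
      rw [Complex.inv_eq_conj habsj]
    simp only [hg]
    rw [hFt, Complex.abs_conj]
  -- epsilon
  set ε : ℝ := ((2:ℝ)^k)⁻¹ with hε
  have hε0 : 0 < ε := by positivity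
  have h2k : (2:ℝ) ≤ (2:ℝ)^k := by
    have := (Nat.cast_le (α := ℝ)).mpr hN2
    rw [hN] at this
    push_cast at this
    linarith
  have hεhalf : ε ≤ 1/2 := by
    rw [hε]
    rw [inv_le_comm₀ (by positivity) (by norm_num)]
    norm_num
    linarith
  have hεπ : ε ≤ Real.pi := by linarith
  have hIg : ∀ a b : ℝ, IntervalIntegrable g MeasureTheory.volume a b :=
    fun a b => hgcont.intervalIntegrable a b
  -- piece A : [0, ε]
  have hIA : ∫ t in (0:ℝ)..ε, g t ≤ 2 := by
    have h1 : ∫ t in (0:ℝ)..ε, g t ≤ ∫ _t in (0:ℝ)..ε, ((N:ℝ)+1)^p := by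
      apply intervalIntegral.integral_mono_on hε0.le (hIg 0 ε) intervalIntegrable_const
      intro x _
      exact Real.rpow_le_rpow (Complex.abs.nonneg _) (hBd1 x) hp0.le
    rw [intervalIntegral.integral_const, smul_eq_mul, sub_zero] at h1
    refine le_trans h1 ?_
    have h2k1 : ((N:ℝ)+1) ≤ (2:ℝ)^(k+1) := by
      rw [hN]
      push_cast
      have h1k : (1:ℝ) ≤ (2:ℝ)^k := by linarith
      rw [pow_succ]
      linarith
    have hstep : ε * ((N:ℝ)+1)^p ≤ ε * ((2:ℝ)^(k+1))^p := by
      apply mul_le_mul_of_nonneg_left _ hε0.le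
      exact Real.rpow_le_rpow (by positivity) h2k1 hp0.le
    refine le_trans hstep ?_
    have e1 : ε = (2:ℝ) ^ (-(k:ℝ)) := by
      rw [hε, Real.rpow_neg (by norm_num : (0:ℝ) ≤ 2), Real.rpow_natCast]
    have e2 : ((2:ℝ)^(k+1))^p = (2:ℝ) ^ ((((k:ℝ))+1)*p) := by
      rw [← Real.rpow_natCast 2 (k+1), ← Real.rpow_mul (by norm_num)]
      push_cast
      ring_nf
    rw [e1, e2, ← Real.rpow_add (by norm_num : (0:ℝ) < 2)]
    calc (2:ℝ) ^ (-(k:ℝ) + ((k:ℝ)+1)*p) ≤ (2:ℝ)^(1:ℝ) := by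
          apply Real.rpow_le_rpow_of_exponent_le (by norm_num)
          have hk0 : (0:ℝ) ≤ (k:ℝ) := Nat.cast_nonneg k
          nlinarith
      _ = 2 := Real.rpow_one 2
  -- piece B : [ε, π]
  have hMpos : 0 < M := by rw [hM]; linarith
  have hIB : ∫ t in ε..Real.pi, g t ≤ (M*Real.pi/2)^p * (Real.pi/(1-p)) := by
    have hbd : ∀ x ∈ Set.Icc ε Real.pi, g x ≤ (M*Real.pi/2)^p * x ^ (-p) := by
      intro x hx
      have hx0 : 0 < x := lt_of_lt_of_le hε0 hx.1
      have hj := jordan_lower x hx0.le hx.2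
      have hab := hAbelB x
      have hF1 : Complex.abs (F x) * (2/Real.pi * x) ≤ M := by
        have h1 : Complex.abs (F x) * (2/Real.pi * x)
            ≤ Complex.abs (F x) * Complex.abs (1 - Complex.exp (Complex.I * (x:ℂ))) :=
          mul_le_mul_of_nonneg_left hj (Complex.abs.nonneg _)
        calc Complex.abs (F x) * (2/Real.pi * x) ≤ _ := h1
          _ ≤ M := by rw [mul_comm]; exact hab
      have hF2 : Complex.abs (F x) ≤ (M*Real.pi/2) * x⁻¹ := by
        rw [← le_div_iff₀ (by positivity : (0:ℝ) < 2/Real.pi * x)] at hF1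
        refine le_trans hF1 (le_of_eq ?_)
        field_simp
      simp only [hg]
      calc Complex.abs (F x) ^ p ≤ ((M*Real.pi/2) * x⁻¹)^p :=
            Real.rpow_le_rpow (Complex.abs.nonneg _) hF2 hp0.le
        _ = (M*Real.pi/2)^p * x^(-p) := by
            rw [Real.mul_rpow (by positivity) (by positivity),
              Real.inv_rpow hx0.le, ← Real.rpow_neg hx0.le]
    have hcont2 : ContinuousOn (fun x : ℝ => (M*Real.pi/2)^p * x ^ (-p)) (Set.uIcc ε Real.pi) := by
      apply ContinuousOn.mul continuousOn_const
      apply ContinuousOn.rpow_const continuousOn_id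
      intro x hx
      left
      rw [Set.uIcc_of_le hεπ] at hx
      exact (lt_of_lt_of_le hε0 hx.1).ne'
    have hIb : IntervalIntegrable (fun x : ℝ => (M*Real.pi/2)^p * x^(-p))
        MeasureTheory.volume ε Real.pi := hcont2.intervalIntegrable
    have h1 := intervalIntegral.integral_mono_on hεπ (hIg ε Real.pi) hIb hbd
    refine le_trans h1 ?_
    rw [intervalIntegral.integral_const_mul]
    apply mul_le_mul_of_nonneg_left _ (Real.rpow_nonneg (by positivity) p)
    rw [integral_rpow (Or.inl (by linarith : (-1:ℝ) < -p))]
    have hp1' : (0:ℝ) < -p + 1 := by linarith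
    have hπ1 : Real.pi ^ (-p+1) ≤ Real.pi := by
      calc Real.pi ^ (-p+1) ≤ Real.pi ^ (1:ℝ) :=
            Real.rpow_le_rpow_of_exponent_le (by linarith) (by linarith)
        _ = Real.pi := Real.rpow_one _
    have hε1 : (0:ℝ) ≤ ε ^ (-p+1) := Real.rpow_nonneg hε0.le _
    rw [div_le_div_iff₀ hp1' (by linarith : (0:ℝ) < 1 - p)]
    nlinarith
  -- total
  have htot : ∫ t in (0:ℝ)..(2*Real.pi), g t ≤ D := by
    have hs1 : ∫ t in (0:ℝ)..(2*Real.pi), g t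
        = (∫ t in (0:ℝ)..Real.pi, g t) + ∫ t in Real.pi..(2*Real.pi), g t :=
      (intervalIntegral.integral_add_adjacent_intervals (hIg _ _) (hIg _ _)).symm
    have hs2 : ∫ t in Real.pi..(2*Real.pi), g t = ∫ t in (0:ℝ)..Real.pi, g t := by
      have h := intervalIntegral.integral_comp_sub_left (a := (0:ℝ)) (b := Real.pi) g (2*Real.pi)
      rw [show 2*Real.pi - Real.pi = Real.pi by ring, sub_zero] at h
      rw [← h]
      exact intervalIntegral.integral_congr fun t _ => hsym t
    have hs3 : ∫ t in (0:ℝ)..Real.pi, g t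
        = (∫ t in (0:ℝ)..ε, g t) + ∫ t in ε..Real.pi, g t :=
      (intervalIntegral.integral_add_adjacent_intervals (hIg _ _) (hIg _ _)).symm
    rw [hs1, hs2, hs3, hD]
    linarith
  have hXle : (1 / (2*Real.pi)) * ∫ t in (0:ℝ)..(2*Real.pi), g t ≤ D := by
    have hint_nn : (0:ℝ) ≤ ∫ t in (0:ℝ)..(2*Real.pi), g t :=
      intervalIntegral.integral_nonneg (by positivity) (fun u _ => hgnn u)
    have h12 : 1/(2*Real.pi) ≤ 1 := by
      rw [div_le_one (by positivity)]; linarith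
    calc (1/(2*Real.pi)) * ∫ t in (0:ℝ)..(2*Real.pi), g t
        ≤ 1 * ∫ t in (0:ℝ)..(2*Real.pi), g t := mul_le_mul_of_nonneg_right h12 hint_nn
      _ = ∫ t in (0:ℝ)..(2*Real.pi), g t := one_mul _
      _ ≤ D := htot
  -- conclusion
  constructor
  · show (1:ℝ) ≤ ((1 / (2*Real.pi)) * ∫ t in (0:ℝ)..(2*Real.pi), g t) ^ (1/p)
    calc (1:ℝ) = 1 ^ (1/p) := (Real.one_rpow _).symm
      _ ≤ _ := Real.rpow_le_rpow zero_le_one hlow (by positivity)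
  · show ((1 / (2*Real.pi)) * ∫ t in (0:ℝ)..(2*Real.pi), g t) ^ (1/p) ≤ (max 1 D) ^ (1/p)
    exact Real.rpow_le_rpow (le_trans zero_le_one hlow)
      (le_trans hXle (le_max_right 1 D)) (by positivity)
end
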